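/- arXiv:math/0305444 — 3 statements merged into one kernel-verified Lean document; each statement's English description precedes it below -/
import Mathlib

section
/- Let M be a von Neumann algebra with faithful normal semifinite trace Tr, let x ∈ M with 0 ≤ x ≤ 1 and Tr(x*x) < ∞, and let f be the spectral projection of x for the interval [1/2, 1]. Then for any projection e ∈ M of finite trace, ‖e - f‖₂ ≤ 2‖e - x‖₂, where ‖y‖₂ = Tr(y*y)^{1/2}. -/
/-- The `L²`-norm associated to a (trace-like) positive linear functional `τ`. -/
noncomputable def n2 {A : Type*} [Ring A] [StarRing A] (τ : A → ℂ) (x : A) : ℝ :=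
  Real.sqrt (τ (star x * x)).re

/-- If `0 ≤ x ≤ 1` in a von Neumann algebra with faithful normal
semifinite trace, `f` is the spectral projection of `x` for `[1/2, 1]` (characterized
by: `f` is a projection commuting with `x`, `x ≥ 1/2` on `f` and `x ≤ 1/2` on `1-f`),
and `e` is any projection of finite trace, then `‖e - f‖₂ ≤ 2‖e - x‖₂`. -/
theorem spectral_proj_two_norm_est
    {A : Type*} [Ring A] [StarRing A] [PartialOrder A] [StarOrderedRing A]
    [Algebra ℂ A] (τ : A →ₗ[ℂ] ℂ)
    (htracial : ∀ x y : A, τ (x * y) = τ (y * x))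
    (hpos : ∀ x : A, 0 ≤ (τ (star x * x)).re ∧ (τ (star x * x)).im = 0)
    (hmono : ∀ x y : A, x ≤ y → (τ x).re ≤ (τ y).re)
    (x f e : A)
    (hx0 : 0 ≤ x) (hx1 : x ≤ 1)
    (hf_idem : f * f = f) (hf_sa : star f = f)
    (hcomm : x * f = f * x)
    (hf_lower : f ≤ 2 • (x * f))
    (hf_upper : 2 • (x * (1 - f)) ≤ 1 - f)
    (he_idem : e * e = e) (he_sa : star e = e) :
    n2 τ (e - f) ≤ 2 * n2 τ (e - x) := by
  have hpos' : ∀ y : A, 0 ≤ (τ (star y * y)).re := fun y => (hpos y).1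
  have hx_sa : star x = x := (IsSelfAdjoint.of_nonneg hx0).star_eq
  have ha_sa : star (e - x) = e - x := by rw [star_sub, he_sa, hx_sa]
  have hb_sa : star (e - f) = e - f := by rw [star_sub, he_sa, hf_sa]
  have hτnn : ∀ y : A, 0 ≤ y → 0 ≤ (τ y).re := by
    intro y hy
    have := hmono 0 y hy
    simpa using this
  set g1 : A := (1 - f) - 2 • (x * (1 - f)) with hg1_def
  set g2 : A := 2 • (x * f) - f with hg2_def
  have hg1p : (0 : A) ≤ g1 := sub_nonneg.2 hf_upper
  have hg2p : (0 : A) ≤ g2 := sub_nonneg.2 hf_lower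
  have h1 : 0 ≤ (τ (e * g1 * e)).re := by
    refine hτnn _ ?_
    have := star_left_conjugate_nonneg hg1p e
    rwa [he_sa] at this
  have h2 : 0 ≤ (τ ((1 - e) * g2 * (1 - e))).re := by
    refine hτnn _ ?_
    have := star_left_conjugate_nonneg hg2p (1 - e)
    rwa [star_sub, star_one, he_sa] at this
  -- trace identities for monomials
  have L1 : τ (e * (f * e)) = τ (f * e) := by
    rw [htracial e (f * e), mul_assoc, he_idem]
  have L3 : τ (e * (x * e)) = τ (x * e) := by
    rw [htracial e (x * e), mul_assoc, he_idem]
  have L4 : τ (e * (x * (f * e))) = τ (x * (f * e)) := by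
    rw [htracial e (x * (f * e)), mul_assoc, mul_assoc, he_idem]
  have L5 : τ (e * (x * f)) = τ (x * (f * e)) := by
    rw [htracial e (x * f), mul_assoc]
  have L2 : τ (e * f) = τ (f * e) := htracial e f
  -- the grand element identity
  have Egrand : (e - f) * (e - f) + e * g1 * e + (1 - e) * g2 * (1 - e)
      = 2 • (e * e) + f * f - f - 2 • (e * (f * e)) - 2 • (e * (x * e))
        + 4 • (e * (x * (f * e))) + 2 • (x * f) - 2 • (x * (f * e)) - 2 • (e * (x * f)) := by
    rw [hg1_def, hg2_def]
    noncomm_ring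
  have Eab : (e - x) * (e - f) + (e - x) * (e - f)
      = 2 • (e * e) - 2 • (e * f) - 2 • (x * e) + 2 • (x * f) := by
    noncomm_ring
  have key : τ ((e - f) * (e - f)) + τ (e * g1 * e) + τ ((1 - e) * g2 * (1 - e))
      = 2 * τ ((e - x) * (e - f)) := by
    have t1 := congrArg τ Egrand
    have t2 := congrArg τ Eab
    simp only [map_add, map_sub, map_nsmul] at t1 t2
    simp only [nsmul_eq_mul, Nat.cast_ofNat] at t1 t2
    rw [L1, L3, L4, L5, hf_idem] at t1
    rw [L2] at t2
    have t2' : 2 * τ ((e - x) * (e - f))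
        = 2 * τ (e * e) - 2 * τ (f * e) - 2 * τ (x * e) + 2 * τ (x * f) := by
      rw [two_mul]; exact t2
    rw [t1, t2']
    ring
  have main : (τ ((e - f) * (e - f))).re ≤ 2 * (τ ((e - x) * (e - f))).re := by
    have := congrArg Complex.re key
    simp only [Complex.add_re, Complex.mul_re, Complex.re_ofNat, Complex.im_ofNat,
      zero_mul, sub_zero] at this
    linarith
  -- positivity of the square of 2(e-x) - (e-f)
  have hw_sa : star (2 • (e - x) - (e - f)) = 2 • (e - x) - (e - f) := by
    rw [star_sub, star_nsmul, ha_sa, hb_sa]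
  have hw : 0 ≤ (τ ((2 • (e - x) - (e - f)) * (2 • (e - x) - (e - f)))).re := by
    have := hpos' (2 • (e - x) - (e - f))
    rwa [hw_sa] at this
  have Ew : (2 • (e - x) - (e - f)) * (2 • (e - x) - (e - f))
      = 4 • ((e - x) * (e - x)) - 2 • ((e - x) * (e - f)) - 2 • ((e - f) * (e - x))
        + (e - f) * (e - f) := by
    noncomm_ring
  have hba : τ ((e - f) * (e - x)) = τ ((e - x) * (e - f)) := htracial _ _
  have hw2 : 0 ≤ 4 * (τ ((e - x) * (e - x))).re - 4 * (τ ((e - x) * (e - f))).re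
      + (τ ((e - f) * (e - f))).re := by
    rw [Ew] at hw
    simp only [map_add, map_sub, map_nsmul] at hw
    simp only [nsmul_eq_mul, Nat.cast_ofNat, hba] at hw
    simp only [Complex.add_re, Complex.sub_re, Complex.mul_re, Complex.re_ofNat,
      Complex.im_ofNat, zero_mul, sub_zero] at hw
    linarith
  -- assemble
  have hbnn : 0 ≤ (τ ((e - f) * (e - f))).re := by
    have := hpos' (e - f); rwa [hb_sa] at this
  have hann : 0 ≤ (τ ((e - x) * (e - x))).re := by
    have := hpos' (e - x); rwa [ha_sa] at this
  rw [show n2 τ (e - f) = Real.sqrt (τ ((e - f) * (e - f))).re by rw [n2, hb_sa],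
      show n2 τ (e - x) = Real.sqrt (τ ((e - x) * (e - x))).re by rw [n2, ha_sa]]
  set u := Real.sqrt (τ ((e - f) * (e - f))).re with hu_def
  set v := Real.sqrt (τ ((e - x) * (e - x))).re with hv_def
  have hu2 : u ^ 2 = (τ ((e - f) * (e - f))).re := Real.sq_sqrt hbnn
  have hv2 : v ^ 2 = (τ ((e - x) * (e - x))).re := Real.sq_sqrt hann
  have hun : 0 ≤ u := Real.sqrt_nonneg _
  have hvn : 0 ≤ v := Real.sqrt_nonneg _
  -- u² ≤ 2c and 4v² - 4c + u² ≥ 0 give u² ≤ 4v²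
  have hu4v : u ^ 2 ≤ 4 * v ^ 2 := by
    rw [hu2, hv2]
    linarith
  nlinarith [sq_nonneg (u - 2 * v), sq_nonneg (u + 2 * v)]
end

section
/- Let E_A and E_B be the conditional expectations (idempotent linear maps) on a finite von Neumann algebra N onto subalgebras A and B respectively. Then for every x ∈ N with ‖x‖ ≤ 1, ‖(E_A - E_B)(x)‖₂² ≤ ‖(I - E_B)E_A‖_{∞,2} + ‖(I - E_A)E_B‖_{∞,2}. In particular ‖E_A - E_B‖_{∞,2} ≤ (2 max{‖(I - E_B)E_A‖_{∞,2}, ‖(I - E_A)E_B‖_{∞,2}})^{1/2}. -/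
/-- The `‖·‖_{∞,2}` norm of a map `F`: the supremum of `‖F x‖₂` over the unit ball. -/
noncomputable def norm2inf {A : Type*} [NormedRing A] [StarRing A]
    (τ : A → ℂ) (F : A → A) : ℝ :=
  ⨆ x : {x : A // ‖x‖ ≤ 1}, n2 τ (F x)

/-- Extend nonnegativity of a quadratic from ℚ to ℝ by density. -/
lemma quad_nonneg_of_rat {a b c : ℝ} (h : ∀ q : ℚ, 0 ≤ a * ((q:ℝ) * q) + b * q + c) :
    ∀ x : ℝ, 0 ≤ a * (x * x) + b * x + c := by
  intro x
  have hcont : Continuous fun x : ℝ => a * (x * x) + b * x + c := by continuity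
  have hS : IsClosed {x : ℝ | 0 ≤ a * (x * x) + b * x + c} :=
    isClosed_le continuous_const hcont
  have hsub : Set.range ((↑) : ℚ → ℝ) ⊆ {x : ℝ | 0 ≤ a * (x * x) + b * x + c} := by
    rintro _ ⟨q, rfl⟩; exact h q
  have hcl : closure (Set.range ((↑) : ℚ → ℝ)) ⊆ {x : ℝ | 0 ≤ a * (x * x) + b * x + c} :=
    closure_minimal hsub hS
  have : x ∈ closure (Set.range ((↑) : ℚ → ℝ)) := by
    rw [Rat.denseRange_cast.closure_eq]; trivial
  exact hcl this

/-- Symmetrized Cauchy–Schwarz for a positive trace form. -/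
lemma cs_sym {A : Type*} [NormedRing A] [StarRing A] [NormedAlgebra ℂ A]
    (τ : A →ₗ[ℂ] ℂ)
    (hpos : ∀ x : A, 0 ≤ (τ (star x * x)).re ∧ (τ (star x * x)).im = 0)
    (a b : A) :
    (τ (star b * a)).re + (τ (star a * b)).re ≤ 2 * (n2 τ a * n2 τ b) := by
  set A₀ := (τ (star a * a)).re with hA₀
  set B₀ := (τ (star b * b)).re with hB₀
  set C := (τ (star b * a)).re + (τ (star a * b)).re with hC
  have key : ∀ t : ℝ, 0 ≤ B₀ * (t * t) + (-C) * t + A₀ := by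
    apply quad_nonneg_of_rat
    intro q
    have hs : star ((q:ℂ) • b) = (q:ℂ) • star b :=
      map_ratCast_smul (starAddEquiv : A ≃+ A) ℂ ℂ q b
    have hexp : star (a - (q:ℂ) • b) * (a - (q:ℂ) • b)
        = star a * a - (q:ℂ) • (star a * b) - (q:ℂ) • (star b * a)
          + ((q:ℂ) * q) • (star b * b) := by
      rw [star_sub, hs]
      simp only [sub_mul, mul_sub, smul_mul_assoc, mul_smul_comm, smul_smul]
      module
    have h0 := (hpos (a - (q:ℂ) • b)).1
    rw [hexp] at h0
    simp only [map_sub, map_add, map_smul, smul_eq_mul, Complex.sub_re, Complex.add_re,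
      Complex.mul_re, Complex.ratCast_re, Complex.ratCast_im, Complex.mul_im] at h0
    rw [hB₀, hC, hA₀]
    push_cast at h0 ⊢
    nlinarith [h0]
  have hdisc := discrim_le_zero key
  rw [discrim] at hdisc
  have hA : 0 ≤ A₀ := (hpos a).1
  have hB : 0 ≤ B₀ := (hpos b).1
  have hC2 : C ^ 2 ≤ 4 * A₀ * B₀ := by nlinarith [hdisc]
  have h1 : C ≤ Real.sqrt (C ^ 2) := by
    rw [Real.sqrt_sq_eq_abs]; exact le_abs_self C
  have h2 : Real.sqrt (C ^ 2) ≤ Real.sqrt (4 * A₀ * B₀) := Real.sqrt_le_sqrt hC2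
  have h3 : Real.sqrt (4 * A₀ * B₀) = 2 * (Real.sqrt A₀ * Real.sqrt B₀) := by
    rw [show (4 : ℝ) * A₀ * B₀ = (2:ℝ)^2 * (A₀ * B₀) by ring,
      Real.sqrt_mul (by positivity), Real.sqrt_sq (by norm_num),
      Real.sqrt_mul hA]
  calc C ≤ Real.sqrt (C ^ 2) := h1
    _ ≤ Real.sqrt (4 * A₀ * B₀) := h2
    _ = 2 * (Real.sqrt A₀ * Real.sqrt B₀) := h3
    _ = 2 * (n2 τ a * n2 τ b) := by rw [n2, n2]

/-- For trace-preserving conditional expectations `E_A, E_B`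
(idempotent, self-adjoint for the trace inner product) on a finite von Neumann algebra:
for every `x` with `‖x‖ ≤ 1`,
`‖(E_A - E_B)(x)‖₂² ≤ ‖(I - E_B)E_A‖_{∞,2} + ‖(I - E_A)E_B‖_{∞,2}`, and in particular
`‖E_A - E_B‖_{∞,2} ≤ (2 max{‖(I - E_B)E_A‖_{∞,2}, ‖(I - E_A)E_B‖_{∞,2}})^{1/2}`. -/
theorem expectation_difference_sq_est
    {A : Type*} [NormedRing A] [StarRing A] [NormedAlgebra ℂ A]
    (τ : A →ₗ[ℂ] ℂ)
    (htracial : ∀ x y : A, τ (x * y) = τ (y * x))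
    (hpos : ∀ x : A, 0 ≤ (τ (star x * x)).re ∧ (τ (star x * x)).im = 0)
    (hunital : τ 1 = 1)
    (hn : ∀ x : A, n2 τ x ≤ ‖x‖)
    (EA EB : A →ₗ[ℂ] A)
    (hA_idem : ∀ x, EA (EA x) = EA x) (hB_idem : ∀ x, EB (EB x) = EB x)
    (hA_sa : ∀ x y : A, τ (star (EA x) * y) = τ (star x * EA y))
    (hB_sa : ∀ x y : A, τ (star (EB x) * y) = τ (star x * EB y))
    (hbddA : BddAbove (Set.range fun x : {x : A // ‖x‖ ≤ 1} => n2 τ (EA x - EB (EA x))))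
    (hbddB : BddAbove (Set.range fun x : {x : A // ‖x‖ ≤ 1} => n2 τ (EB x - EA (EB x)))) :
    (∀ x : A, ‖x‖ ≤ 1 →
        (n2 τ (EA x - EB x)) ^ 2 ≤
          norm2inf τ (fun y => EA y - EB (EA y)) + norm2inf τ (fun y => EB y - EA (EB y))) ∧
      norm2inf τ (fun y => EA y - EB y) ≤
        Real.sqrt (2 * max (norm2inf τ (fun y => EA y - EB (EA y)))
          (norm2inf τ (fun y => EB y - EA (EB y)))) := by
  classical
  have hn2nonneg : ∀ z : A, 0 ≤ n2 τ z := fun z => Real.sqrt_nonneg _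
  have main : ∀ x : A, ‖x‖ ≤ 1 →
      (n2 τ (EA x - EB x)) ^ 2 ≤
        norm2inf τ (fun y => EA y - EB (EA y)) + norm2inf τ (fun y => EB y - EA (EB y)) := by
    intro x hx
    have hEAd : EA (EA x - EB x) = (EA x - EB x) + (EB x - EA (EB x)) := by
      rw [map_sub, hA_idem]; abel
    have hEBd : EB (EA x - EB x) = (EA x - EB x) - (EA x - EB (EA x)) := by
      rw [map_sub, hB_idem]; abel
    have id1 : τ (star (EA x - EB x) * (EA x - EB x))
        = τ (star x * (EB x - EA (EB x))) + τ (star x * (EA x - EB (EA x))) := by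
      calc τ (star (EA x - EB x) * (EA x - EB x))
          = τ (star (EA x) * (EA x - EB x)) - τ (star (EB x) * (EA x - EB x)) := by
            rw [star_sub, sub_mul, map_sub]
        _ = τ (star x * EA (EA x - EB x)) - τ (star x * EB (EA x - EB x)) := by
            rw [hA_sa, hB_sa]
        _ = τ (star x * ((EA x - EB x) + (EB x - EA (EB x))))
            - τ (star x * ((EA x - EB x) - (EA x - EB (EA x)))) := by
            rw [hEAd, hEBd]
        _ = τ (star x * (EB x - EA (EB x))) + τ (star x * (EA x - EB (EA x))) := by
            simp only [mul_add, mul_sub, map_add, map_sub]; ring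
    have id2 : τ (star (EA x - EB x) * (EA x - EB x))
        = τ (star (EB x - EA (EB x)) * x) + τ (star (EA x - EB (EA x)) * x) := by
      calc τ (star (EA x - EB x) * (EA x - EB x))
          = τ (star (EA x - EB x) * EA x) - τ (star (EA x - EB x) * EB x) := by
            rw [mul_sub, map_sub]
        _ = τ (star (EA (EA x - EB x)) * x) - τ (star (EB (EA x - EB x)) * x) := by
            rw [hA_sa, hB_sa]
        _ = τ (star ((EA x - EB x) + (EB x - EA (EB x))) * x)
            - τ (star ((EA x - EB x) - (EA x - EB (EA x))) * x) := by
            rw [hEAd, hEBd]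
        _ = τ (star (EB x - EA (EB x)) * x) + τ (star (EA x - EB (EA x)) * x) := by
            simp only [star_add, star_sub, add_mul, sub_mul, map_add, map_sub]; ring
    have hsum : τ (star (EA x - EB x) * (EA x - EB x)) + τ (star (EA x - EB x) * (EA x - EB x))
        = (τ (star x * (EA x - EB (EA x))) + τ (star (EA x - EB (EA x)) * x))
          + (τ (star x * (EB x - EA (EB x))) + τ (star (EB x - EA (EB x)) * x)) := by
      linear_combination id1 + id2
    have hre : 2 * (τ (star (EA x - EB x) * (EA x - EB x))).re
        = ((τ (star x * (EA x - EB (EA x)))).re + (τ (star (EA x - EB (EA x)) * x)).re)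
          + ((τ (star x * (EB x - EA (EB x)))).re + (τ (star (EB x - EA (EB x)) * x)).re) := by
      have := congrArg Complex.re hsum
      simp only [Complex.add_re] at this
      linarith
    have cs1 := cs_sym τ hpos (EA x - EB (EA x)) x
    have cs2 := cs_sym τ hpos (EB x - EA (EB x)) x
    have hx2 : n2 τ x ≤ 1 := le_trans (hn x) hx
    have hb1 : n2 τ (EA x - EB (EA x)) * n2 τ x ≤ n2 τ (EA x - EB (EA x)) :=
      mul_le_of_le_one_right (hn2nonneg _) hx2
    have hb2 : n2 τ (EB x - EA (EB x)) * n2 τ x ≤ n2 τ (EB x - EA (EB x)) :=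
      mul_le_of_le_one_right (hn2nonneg _) hx2
    have hwle : n2 τ (EA x - EB (EA x)) ≤ norm2inf τ (fun y => EA y - EB (EA y)) := by
      have := le_ciSup hbddA (⟨x, hx⟩ : {x : A // ‖x‖ ≤ 1})
      simpa [norm2inf] using this
    have hw'le : n2 τ (EB x - EA (EB x)) ≤ norm2inf τ (fun y => EB y - EA (EB y)) := by
      have := le_ciSup hbddB (⟨x, hx⟩ : {x : A // ‖x‖ ≤ 1})
      simpa [norm2inf] using this
    have hsq : (n2 τ (EA x - EB x)) ^ 2
        = (τ (star (EA x - EB x) * (EA x - EB x))).re := by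
      rw [n2, Real.sq_sqrt (hpos _).1]
    rw [hsq]
    linarith
  refine ⟨main, ?_⟩
  haveI : Nonempty {x : A // ‖x‖ ≤ 1} := ⟨⟨0, by simp⟩⟩
  have hα0 : 0 ≤ norm2inf τ (fun y => EA y - EB (EA y)) := by
    have h := le_ciSup hbddA (⟨0, by simp⟩ : {x : A // ‖x‖ ≤ 1})
    have h0 := hn2nonneg (EA (0:A) - EB (EA (0:A)))
    calc (0:ℝ) ≤ n2 τ (EA (0:A) - EB (EA (0:A))) := h0
      _ ≤ _ := by simpa [norm2inf] using h
  have hβ0 : 0 ≤ norm2inf τ (fun y => EB y - EA (EB y)) := by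
    have h := le_ciSup hbddB (⟨0, by simp⟩ : {x : A // ‖x‖ ≤ 1})
    have h0 := hn2nonneg (EB (0:A) - EA (EB (0:A)))
    calc (0:ℝ) ≤ n2 τ (EB (0:A) - EA (EB (0:A))) := h0
      _ ≤ _ := by simpa [norm2inf] using h
  rw [norm2inf]
  apply ciSup_le
  rintro ⟨x, hx⟩
  have h := main x hx
  have hnn := hn2nonneg (EA x - EB x)
  have heq : n2 τ (EA x - EB x) = Real.sqrt ((n2 τ (EA x - EB x)) ^ 2) :=
    (Real.sqrt_sq hnn).symm
  simp only []
  rw [heq]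
  apply Real.sqrt_le_sqrt
  have hm1 := le_max_left (norm2inf τ (fun y => EA y - EB (EA y)))
    (norm2inf τ (fun y => EB y - EA (EB y)))
  have hm2 := le_max_right (norm2inf τ (fun y => EA y - EB (EA y)))
    (norm2inf τ (fun y => EB y - EA (EB y)))
  linarith
end

section
/- Let N be a II₁ factor with trace τ, M ⊆ N a von Neumann subalgebra, and 0 < δ < (2/5)^{1/2}. Suppose every x ∈ N with ‖x‖ ≤ 1 lies within δ of M in ‖·‖₂. Then every projection q ∈ M' ∩ N satisfies τ(q) ∈ [0, δ²/2] ∪ [1 - δ²/2, 1]. -/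
/-- Let `M` be a von Neumann subalgebra of a II₁ factor `A`
(comparison of projections is encoded by `hcomp`) with unital faithful normal trace `τ`,
and let `0 < δ < (2/5)^{1/2}`.  If every `x ∈ A` with `‖x‖ ≤ 1` lies within `δ` of `M`
in `‖·‖₂`, then every projection `q ∈ M' ∩ A` satisfies
`τ(q) ∈ [0, δ²/2] ∪ [1 - δ²/2, 1]`. -/
theorem relative_commutant_projection_trace_dichotomy
    {A : Type*} [NormedRing A] [StarRing A] [CStarRing A] [PartialOrder A]
    [StarOrderedRing A] [NormedAlgebra ℂ A] [StarModule ℂ A]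
    (τ : A →ₗ[ℂ] ℂ)
    (htracial : ∀ x y : A, τ (x * y) = τ (y * x))
    (hpos : ∀ x : A, 0 ≤ (τ (star x * x)).re ∧ (τ (star x * x)).im = 0)
    (hfaithful : ∀ x : A, τ (star x * x) = 0 → x = 0)
    (hunital : τ 1 = 1)
    (M : StarSubalgebra ℂ A)
    (hcomp : ∀ e f : A, e * e = e → star e = e → f * f = f → star f = f →
      (τ f).re ≤ (τ e).re →
      ∃ v g : A, star v * v = f ∧ v * star v = g ∧ g * g = g ∧ star g = g ∧ g * e = g)
    (δ : ℝ) (hδ0 : 0 < δ) (hδ1 : δ ^ 2 < 2 / 5)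
    (hcont : ∀ x : A, ‖x‖ ≤ 1 → ∃ m ∈ M, n2 τ (x - m) ≤ δ)
    (q : A) (hq_idem : q * q = q) (hq_sa : star q = q)
    (hq_comm : ∀ m ∈ M, q * m = m * q) :
    (τ q).re ≤ δ ^ 2 / 2 ∨ 1 - δ ^ 2 / 2 ≤ (τ q).re := by
  have key : ∀ q : A, q * q = q → star q = q → (∀ m ∈ M, q * m = m * q) →
      (τ (1 - q)).re ≤ (τ q).re → 1 - (τ q).re ≤ δ ^ 2 / 2 := by
    clear hq_idem hq_sa hq_comm q
    intro q hq_idem hq_sa hq_comm hle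
    have hp_idem : (1 - q) * (1 - q) = 1 - q := by
      have h : (1 - q) * (1 - q) = 1 - q - (q - q * q) := by noncomm_ring
      rw [h, hq_idem]; simp
    have hp_sa : star (1 - q) = 1 - q := by simp [star_sub, hq_sa]
    obtain ⟨v, g, hvv, hvv', hg_idem, hg_sa, hgq⟩ :=
      hcomp q (1 - q) hq_idem hq_sa hp_idem hp_sa hle
    -- v is a partial isometry: v * (1 - q) = v
    have hv1q : v * (1 - q) = v := by
      have h0 : star (v * (1 - q) - v) * (v * (1 - q) - v) = 0 := by
        have h : star (v * (1 - q) - v) * (v * (1 - q) - v) =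
            (1 - q) * (star v * v) * (1 - q) - (1 - q) * (star v * v)
              - star v * v * (1 - q) + star v * v := by
          simp only [star_sub, star_mul, hp_sa]
          noncomm_ring
        rw [h, hvv]
        simp only [← mul_assoc, hp_idem]
        abel
      have := (CStarRing.star_mul_self_eq_zero_iff _).mp h0
      linear_combination (norm := noncomm_ring) this
    have hvq : v * q = 0 := by
      have h : v - v * q = v := by rw [← mul_one_sub, hv1q]
      exact sub_eq_self.mp h
    have hqg : q * g = g := by
      have := congrArg star hgq
      simpa [star_mul, hq_sa, hg_sa] using this
    have hgv : g * v = v := by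
      calc g * v = v * (star v * v) := by rw [← hvv', mul_assoc]
        _ = v := by rw [hvv, hv1q]
    have hqv : q * v = v := by
      calc q * v = q * (g * v) := by rw [hgv]
        _ = (q * g) * v := by rw [mul_assoc]
        _ = v := by rw [hqg, hgv]
    have hsvq : star v * q = star v := by
      have := congrArg star hqv
      simpa [star_mul, hq_sa] using this
    have hqsv : q * star v = 0 := by
      have := congrArg star hvq
      simpa [star_mul, hq_sa] using this
    have hvv0 : v * v = 0 := by
      have h : v * v = (v * q) * v := by rw [mul_assoc, hqv]
      rw [h, hvq, zero_mul]
    have hsvsv0 : star v * star v = 0 := by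
      have := congrArg star hvv0
      simpa [star_mul] using this
    -- w = v + star v
    set w : A := v + star v with hw
    have hw_sa : star w = w := by simp [hw, star_add, add_comm]
    have hw2 : w * w = g + (1 - q) := by
      have h : w * w = v * v + v * star v + star v * v + star v * star v := by
        rw [hw]; noncomm_ring
      rw [h, hvv0, hsvsv0, hvv, hvv']
      abel
    -- g + (1 - q) is a projection
    have hgp0 : g * (1 - q) = 0 := by rw [mul_one_sub, hgq, sub_self]
    have hpg0 : (1 - q) * g = 0 := by rw [one_sub_mul, hqg, sub_self]
    have he_idem : (g + (1 - q)) * (g + (1 - q)) = g + (1 - q) := by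
      have h : (g + (1 - q)) * (g + (1 - q)) =
          g * g + g * (1 - q) + (1 - q) * g + (1 - q) * (1 - q) := by noncomm_ring
      rw [h, hg_idem, hgp0, hpg0, hp_idem]; abel
    have he_sa : star (g + (1 - q)) = g + (1 - q) := by simp [star_add, hg_sa, hp_sa]
    -- norm bound ‖w‖ ≤ 1
    have he_norm : ‖g + (1 - q)‖ ≤ 1 := by
      have h1 : ‖star (g + (1 - q)) * (g + (1 - q))‖ = ‖g + (1 - q)‖ * ‖g + (1 - q)‖ :=
        CStarRing.norm_star_mul_self
      rw [he_sa, he_idem] at h1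
      nlinarith [norm_nonneg (g + (1 - q))]
    have hw_norm : ‖w‖ ≤ 1 := by
      have h1 : ‖star w * w‖ = ‖w‖ * ‖w‖ := CStarRing.norm_star_mul_self
      rw [hw_sa, hw2] at h1
      nlinarith [norm_nonneg w, norm_nonneg (g + (1 - q))]
    obtain ⟨m, hm, hdist⟩ := hcont w hw_norm
    set x : A := w - m with hx
    have hxr : (τ (star x * x)).re ≤ δ ^ 2 := by
      have hr0 : 0 ≤ (τ (star x * x)).re := (hpos x).1
      have : Real.sqrt (τ (star x * x)).re ≤ δ := hdist
      nlinarith [Real.sq_sqrt hr0, Real.sqrt_nonneg (τ (star x * x)).re]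
    -- the cutting computation
    have step : ∀ a b : A, a * a = a → star a = a → b * b = b → star b = b →
        τ (star (a * x * b) * (a * x * b)) = τ (star x * a * x * b) := by
      intro a b ha ha' hb hb'
      have h1 : star (a * x * b) * (a * x * b) = b * (star x * a * x * b) := by
        simp only [star_mul, ha', hb', mul_assoc]
        rw [← mul_assoc a a, ha]
      rw [h1, htracial]
      rw [mul_assoc, hb]
    have hps : star x * x = star x * q * x * q + star x * q * x * (1 - q)
        + star x * (1 - q) * x * q + star x * (1 - q) * x * (1 - q) := by
      noncomm_ring
    have hdecomp : τ (star x * x) =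
        τ (star (q * x * q) * (q * x * q))
        + τ (star (q * x * (1 - q)) * (q * x * (1 - q)))
        + τ (star ((1 - q) * x * q) * ((1 - q) * x * q))
        + τ (star ((1 - q) * x * (1 - q)) * ((1 - q) * x * (1 - q))) := by
      rw [step q q hq_idem hq_sa hq_idem hq_sa,
        step q (1 - q) hq_idem hq_sa hp_idem hp_sa,
        step (1 - q) q hp_idem hp_sa hq_idem hq_sa,
        step (1 - q) (1 - q) hp_idem hp_sa hp_idem hp_sa,
        ← map_add, ← map_add, ← map_add, ← hps]
    -- identify the cross cuts
    have hz2 : q * x * (1 - q) = v := by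
      have h1 : q * x * (1 - q) =
          q * v * (1 - q) + q * star v * (1 - q) - q * m * (1 - q) := by
        rw [hx, hw]; noncomm_ring
      rw [h1, hqv, hqsv, hq_comm m hm, hv1q]
      have h2 : m * q * (1 - q) = m * (q - q * q) := by noncomm_ring
      rw [h2, hq_idem, sub_self, mul_zero, zero_mul]
      abel
    have hz3 : (1 - q) * x * q = star v := by
      have h1 : (1 - q) * x * q =
          v * q - q * v * q + (star v * q - q * star v * q) - (1 - q) * m * q := by
        rw [hx, hw]; noncomm_ring
      rw [h1, hvq, hqv, hvq, hsvq, hqsv]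
      have hcm : (1 - q) * m = m * (1 - q) := by
        rw [one_sub_mul, mul_one_sub, hq_comm m hm]
      rw [hcm]
      have h2 : m * (1 - q) * q = m * (q - q * q) := by noncomm_ring
      rw [h2, hq_idem]
      simp
    have hcross2 : τ (star (q * x * (1 - q)) * (q * x * (1 - q))) = τ (1 - q) := by
      rw [hz2, hvv]
    have hcross3 : τ (star ((1 - q) * x * q) * ((1 - q) * x * q)) = τ (1 - q) := by
      rw [hz3, star_star, htracial, hvv]
    have hnn1 : 0 ≤ (τ (star (q * x * q) * (q * x * q))).re := (hpos _).1
    have hnn4 : 0 ≤ (τ (star ((1 - q) * x * (1 - q)) * ((1 - q) * x * (1 - q)))).re :=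
      (hpos _).1
    have hτp : (τ (1 - q)).re = 1 - (τ q).re := by
      rw [map_sub, hunital, Complex.sub_re, Complex.one_re]
    have hfin : (τ (star x * x)).re =
        (τ (star (q * x * q) * (q * x * q))).re + (1 - (τ q).re) + (1 - (τ q).re)
        + (τ (star ((1 - q) * x * (1 - q)) * ((1 - q) * x * (1 - q)))).re := by
      rw [hdecomp, hcross2, hcross3]
      simp only [Complex.add_re, hτp]
    linarith [hfin ▸ hxr]
  rcases le_total ((τ (1 - q)).re) ((τ q).re) with h | h
  · right
    have := key q hq_idem hq_sa hq_comm h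
    linarith
  · left
    have hp_idem : (1 - q) * (1 - q) = 1 - q := by
      have hh : (1 - q) * (1 - q) = 1 - q - (q - q * q) := by noncomm_ring
      rw [hh, hq_idem]; simp
    have hp_sa : star (1 - q) = 1 - q := by simp [star_sub, hq_sa]
    have hp_comm : ∀ m ∈ M, (1 - q) * m = m * (1 - q) := by
      intro m hm
      rw [one_sub_mul, mul_one_sub, hq_comm m hm]
    have hle : (τ (1 - (1 - q))).re ≤ (τ (1 - q)).re := by
      simpa using h
    have := key (1 - q) hp_idem hp_sa hp_comm hle
    have hτp : (τ (1 - q)).re = 1 - (τ q).re := by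
      rw [map_sub, hunital, Complex.sub_re, Complex.one_re]
    linarith
end
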